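/- arXiv:1902.04492 — 6 statements merged into one kernel-verified Lean document; each statement's English description precedes it below -/
import Mathlib

section
/- Let W be a Krein-selfadjoint operator on H and S a closed subspace of H. Then W is S-complementable if and only if there exists a bounded projection Q ∈ L(H) (Q² = Q) with range(Q) = S such that W ∘ Q = Q^# ∘ W. -/
/-!
With `A := J ∘ W`, which is selfadjoint, `W ∘ Q = Q^# ∘ W` says `A ∘ Q = Q* ∘ A`, and for
an idempotent `Q` this holds iff `A` maps `ker Q` into `(range Q)ᗮ`. Complementability
says `S + M = H` for `M := A⁻¹(Sᗮ)`. So a projection onto `S` with the commutation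
property has its kernel in `M`, giving `S + M = H`. Conversely, as `S ∩ M` may be nonzero,
take the orthogonal complement `N` of `S ∩ M` inside `M`: then `S ⊕ N = H` with `N`
closed, and the projection onto `S` along `N` is bounded and works.
-/

open ContinuousLinearMap

/-- The Krein adjoint `T^# = J ∘ T* ∘ J`. -/
noncomputable def kadj {H : Type*} [NormedAddCommGroup H] [InnerProductSpace ℂ H]
    [CompleteSpace H] (J T : H →L[ℂ] H) : H →L[ℂ] H := J ∘L adjoint T ∘L J

open Submodule

theorem ContinuousLinearMap.comp_comp_eq_of_comp_self_eq_one {R M N : Type*} [Semiring R]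
    [TopologicalSpace M] [AddCommMonoid M] [Module R M] [TopologicalSpace N] [AddCommMonoid N]
    [Module R N] {J : M →L[R] M} (hJ : J ∘L J = 1) (T : N →L[R] M) :
    J ∘L (J ∘L T) = T := by
  rw [← comp_assoc, hJ, one_def, id_comp]

section InnerProductSpace

variable {𝕜 E : Type*} [RCLike 𝕜] [NormedAddCommGroup E] [InnerProductSpace 𝕜 E]

theorem Submodule.isCompl_orthogonal_inf_of_sup_eq_top {S M : Submodule 𝕜 E}
    [(S ⊓ M).HasOrthogonalProjection] (h : S ⊔ M = ⊤) : IsCompl S ((S ⊓ M)ᗮ ⊓ M) := by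
  constructor
  · rw [disjoint_iff, ← le_bot_iff, ← (S ⊓ M).inf_orthogonal_eq_bot]
    exact le_inf (inf_le_inf_left S inf_le_right) (inf_le_right.trans inf_le_left)
  · rw [codisjoint_iff]
    calc S ⊔ (S ⊓ M)ᗮ ⊓ M = S ⊔ (S ⊓ M ⊔ (S ⊓ M)ᗮ ⊓ M) := by
          rw [← sup_assoc, sup_inf_self]
      _ = ⊤ := by rw [sup_orthogonal_inf_of_hasOrthogonalProjection inf_le_right, h]

theorem inner_apply_eq_inner_apply_apply_of_ker_le {A Q : E →L[𝕜] E} (hQ : IsIdempotentElem Q)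
    (hker : Q.ker ≤ (Q.range)ᗮ.comap (A : E →ₗ[𝕜] E)) (x y : E) :
    inner 𝕜 (Q y) (A x) = inner 𝕜 (Q y) (A (Q x)) := by
  have hx : x - Q x ∈ Q.ker := by
    simp [LinearMap.mem_ker, ← mul_apply_eq_comp, hQ.eq]
  have := (mem_orthogonal _ _).1 (hker hx) (Q y) (LinearMap.mem_range_self _ y)
  rwa [ContinuousLinearMap.coe_coe, map_sub, inner_sub_right, sub_eq_zero] at this

variable [CompleteSpace E]

theorem ContinuousLinearMap.comp_eq_adjoint_comp_iff_ker_le {A Q : E →L[𝕜] E}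
    (hA : IsSelfAdjoint A) (hQ : IsIdempotentElem Q) :
    A ∘L Q = adjoint Q ∘L A ↔ Q.ker ≤ (Q.range)ᗮ.comap (A : E →ₗ[𝕜] E) := by
  have hsymm : ∀ u v, inner 𝕜 (A u) v = inner 𝕜 u (A v) := hA.isSymmetric
  constructor
  · rintro h n (hn : Q n = 0)
    rw [mem_comap, mem_orthogonal]
    rintro _ ⟨y, rfl⟩
    change inner 𝕜 (Q y) (A n) = 0
    rw [← adjoint_inner_right, ← comp_apply, ← h, comp_apply, hn, map_zero, inner_zero_right]
  · intro hker
    ext x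
    refine ext_inner_right 𝕜 fun y => ?_
    calc inner 𝕜 (A (Q x)) y = inner 𝕜 (Q x) (A (Q y)) := by
          rw [hsymm, inner_apply_eq_inner_apply_apply_of_ker_le hQ hker]
      _ = inner 𝕜 (A x) (Q y) := by
          rw [← inner_conj_symm (A x), inner_apply_eq_inner_apply_apply_of_ker_le hQ hker x y,
            inner_conj_symm, hsymm]
      _ = inner 𝕜 (adjoint Q (A x)) y := (adjoint_inner_left ..).symm

theorem exists_isIdempotentElem_range_eq_comp_eq_adjoint_comp_iff {A : E →L[𝕜] E}
    (hA : IsSelfAdjoint A) {S : Submodule 𝕜 E} (hS : IsClosed (S : Set E)) :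
    (∃ Q : E →L[𝕜] E, IsIdempotentElem Q ∧ Q.range = S ∧ A ∘L Q = adjoint Q ∘L A) ↔
      S ⊔ Sᗮ.comap (A : E →ₗ[𝕜] E) = ⊤ := by
  set M := Sᗮ.comap (A : E →ₗ[𝕜] E)
  constructor
  · rintro ⟨Q, hQ, rfl, hAQ⟩
    rw [eq_top_iff, ← hQ.isTopCompl.isCompl.sup_eq_top]
    exact sup_le_sup_left ((comp_eq_adjoint_comp_iff_ker_le hA hQ).1 hAQ) _
  · intro h
    have hM : IsClosed (M : Set E) := (isClosed_orthogonal S).preimage A.continuous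
    have : CompleteSpace (S ⊓ M : Submodule 𝕜 E) := (hS.inter hM).completeSpace_coe
    have hN : IsClosed (((S ⊓ M)ᗮ ⊓ M : Submodule 𝕜 E) : Set E) :=
      (isClosed_orthogonal _).inter hM
    have hSN := (isCompl_orthogonal_inf_of_sup_eq_top h).isTopCompl_of_isClosed hS hN
    refine ⟨S.projectionL _ hSN, isIdempotentElem_projectionL hSN, range_projectionL hSN, ?_⟩
    rw [comp_eq_adjoint_comp_iff_ker_le hA (isIdempotentElem_projectionL hSN),
      range_projectionL, ker_projectionL]
    exact inf_le_right

end InnerProductSpace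

section Krein

variable {H : Type*} [NormedAddCommGroup H] [InnerProductSpace ℂ H] [CompleteSpace H]
  {J : H →L[ℂ] H}

theorem isSelfAdjoint_comp_of_kadj_eq_self (hJ : IsSelfAdjoint J) (hJ2 : J ∘L J = 1)
    {W : H →L[ℂ] H} (hW : kadj J W = W) : IsSelfAdjoint (J ∘L W) := by
  rw [isSelfAdjoint_iff']
  calc adjoint (J ∘L W) = adjoint W ∘L J := by rw [adjoint_comp, hJ.adjoint_eq]
    _ = J ∘L kadj J W := by rw [kadj, comp_comp_eq_of_comp_self_eq_one hJ2]
    _ = J ∘L W := by rw [hW]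

theorem comp_eq_kadj_comp_iff (hJ2 : J ∘L J = 1) (W Q : H →L[ℂ] H) :
    W ∘L Q = kadj J Q ∘L W ↔ (J ∘L W) ∘L Q = adjoint Q ∘L (J ∘L W) := by
  simp only [kadj, comp_assoc]
  exact ⟨fun h => by rw [h, comp_comp_eq_of_comp_self_eq_one hJ2],
    fun h => by rw [← h, comp_comp_eq_of_comp_self_eq_one hJ2]⟩

end Krein

/-- `W` is `S`-complementable iff there is a bounded projection `Q` with
range `S` such that `W ∘ Q = Q^# ∘ W`. -/
theorem stmt0 {H : Type*} [NormedAddCommGroup H] [InnerProductSpace ℂ H] [CompleteSpace H]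
    (J : H →L[ℂ] H) (hJ : IsSelfAdjoint J) (hJ2 : J ∘L J = 1)
    (W : H →L[ℂ] H) (hW : kadj J W = W)
    (S : Submodule ℂ H) (hS : IsClosed (S : Set H)) :
    (∀ h : H, ∃ s k : H, s ∈ S ∧ (∀ t ∈ S, (inner ℂ (J (W k)) t : ℂ) = 0) ∧ h = s + k) ↔
      ∃ Q : H →L[ℂ] H, Q ∘L Q = Q ∧ LinearMap.range (Q : H →ₗ[ℂ] H) = S ∧ W ∘L Q = kadj J Q ∘L W := by
  have hcompl : (∀ h : H, ∃ s k : H, s ∈ S ∧ (∀ t ∈ S, inner ℂ (J (W k)) t = 0) ∧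
      h = s + k) ↔ S ⊔ Sᗮ.comap ((J ∘L W : H →L[ℂ] H) : H →ₗ[ℂ] H) = ⊤ := by
    simp only [eq_top_iff', mem_sup, mem_comap, mem_orthogonal']
    exact forall_congr' fun h => ⟨fun ⟨s, k, hs, hk, hsk⟩ => ⟨s, hs, k, hk, hsk.symm⟩,
      fun ⟨s, hs, k, hk, hsk⟩ => ⟨s, k, hs, hk, hsk.symm⟩⟩
  rw [hcompl, ← exists_isIdempotentElem_range_eq_comp_eq_adjoint_comp_iff
    (isSelfAdjoint_comp_of_kadj_eq_self hJ hJ2 hW) hS]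
  exact exists_congr fun Q =>
    and_congr Iff.rfl (and_congr Iff.rfl (comp_eq_kadj_comp_iff hJ2 W Q).symm)
end

section
/- Let W be a Krein-selfadjoint operator on H, S a closed subspace of H, and let Q₁, Q₂ ∈ L(H) be projections (Qᵢ² = Qᵢ) with range(Qᵢ) = S and W ∘ Qᵢ = Qᵢ^# ∘ W for i = 1,2. Then W ∘ (I − Q₁) = W ∘ (I − Q₂); that is, the operator W(I − Q) (the Schur complement of W to S) does not depend on the choice of such a projection Q. -/
/-!
Two idempotents with the same range absorb each other: `Q₂ Q₁ = Q₁` and `Q₁ Q₂ = Q₂`. Since `#` is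
antimultiplicative, `W Q₁ = W Q₂ Q₁ = Q₂^# Q₁^# W = (Q₁ Q₂)^# W = Q₂^# W = W Q₂`.
-/

open ContinuousLinearMap

theorem ContinuousLinearMap.comp_eq_right_of_range_le {R M : Type*} [Semiring R]
    [TopologicalSpace M] [AddCommMonoid M] [Module R M] {P Q : M →L[R] M}
    (hP : P ∘L P = P) (h : LinearMap.range (Q : M →ₗ[R] M) ≤ LinearMap.range (P : M →ₗ[R] M)) :
    P ∘L Q = Q :=
  have hP' : IsIdempotentElem (P : M →ₗ[R] M) := congrArg ((↑) : (M →L[R] M) → M →ₗ[R] M) hP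
  coe_injective ((LinearMap.IsIdempotentElem.comp_eq_right_iff hP' _).mpr h)

section Krein

variable {H : Type*} [NormedAddCommGroup H] [InnerProductSpace ℂ H] [CompleteSpace H]

theorem kadj_comp {J : H →L[ℂ] H} (hJ2 : J ∘L J = 1) (A B : H →L[ℂ] H) :
    kadj J (A ∘L B) = kadj J B ∘L kadj J A := by
  simp only [kadj, adjoint_comp, comp_assoc]
  rw [← comp_assoc J J, hJ2, one_def, id_comp]

theorem comp_eq_comp_of_comp_eq_kadj_comp {J W P Q : H →L[ℂ] H} (hJ2 : J ∘L J = 1)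
    (hWP : W ∘L P = kadj J P ∘L W) (hWQ : W ∘L Q = kadj J Q ∘L W)
    (hPQ : P ∘L Q = Q) (hQP : Q ∘L P = P) :
    W ∘L P = W ∘L Q :=
  calc W ∘L P = W ∘L Q ∘L P := by rw [hQP]
    _ = kadj J Q ∘L kadj J P ∘L W := by rw [← comp_assoc, hWQ, comp_assoc, hWP]
    _ = kadj J (P ∘L Q) ∘L W := by rw [kadj_comp hJ2, comp_assoc]
    _ = W ∘L Q := by rw [hPQ, hWQ]

end Krein

theorem stmt1_general {H : Type*} [NormedAddCommGroup H] [InnerProductSpace ℂ H] [CompleteSpace H]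
    (J : H →L[ℂ] H) (hJ2 : J ∘L J = 1)
    (W : H →L[ℂ] H)
    (S : Submodule ℂ H)
    (Q₁ Q₂ : H →L[ℂ] H)
    (hQ₁ : Q₁ ∘L Q₁ = Q₁) (hQ₂ : Q₂ ∘L Q₂ = Q₂)
    (hran₁ : LinearMap.range (Q₁ : H →ₗ[ℂ] H) = S) (hran₂ : LinearMap.range (Q₂ : H →ₗ[ℂ] H) = S)
    (hWQ₁ : W ∘L Q₁ = kadj J Q₁ ∘L W) (hWQ₂ : W ∘L Q₂ = kadj J Q₂ ∘L W) :
    W ∘L (1 - Q₁) = W ∘L (1 - Q₂) := by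
  have h12 : Q₁ ∘L Q₂ = Q₂ := comp_eq_right_of_range_le hQ₁ (hran₂.trans hran₁.symm).le
  have h21 : Q₂ ∘L Q₁ = Q₁ := comp_eq_right_of_range_le hQ₂ (hran₁.trans hran₂.symm).le
  rw [comp_sub, comp_sub, comp_eq_comp_of_comp_eq_kadj_comp hJ2 hWQ₁ hWQ₂ h12 h21]

/-- the Schur complement `W(I − Q)` does not depend on the choice of the
projection `Q` onto `S` satisfying `W ∘ Q = Q^# ∘ W`. -/
theorem stmt1 {H : Type*} [NormedAddCommGroup H] [InnerProductSpace ℂ H] [CompleteSpace H]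
    (J : H →L[ℂ] H) (hJ : IsSelfAdjoint J) (hJ2 : J ∘L J = 1)
    (W : H →L[ℂ] H) (hW : kadj J W = W)
    (S : Submodule ℂ H) (hS : IsClosed (S : Set H))
    (Q₁ Q₂ : H →L[ℂ] H)
    (hQ₁ : Q₁ ∘L Q₁ = Q₁) (hQ₂ : Q₂ ∘L Q₂ = Q₂)
    (hran₁ : LinearMap.range (Q₁ : H →ₗ[ℂ] H) = S) (hran₂ : LinearMap.range (Q₂ : H →ₗ[ℂ] H) = S)
    (hWQ₁ : W ∘L Q₁ = kadj J Q₁ ∘L W) (hWQ₂ : W ∘L Q₂ = kadj J Q₂ ∘L W) :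
    W ∘L (1 - Q₁) = W ∘L (1 - Q₂) :=
  stmt1_general J hJ2 W S Q₁ Q₂ hQ₁ hQ₂ hran₁ hran₂ hWQ₁ hWQ₂
end

section
/- Let W be a Krein-selfadjoint operator on H, S a closed W-nonnegative subspace of H, and suppose W is S-complementable, witnessed by a projection Q ∈ L(H) with range(Q) = S and W ∘ Q = Q^# ∘ W. Then W(I − Q) is the greatest lower bound, in the Krein order, of the family {E^# ∘ W ∘ E : E ∈ L(H), E² = E, ker(E) = S}: one has W(I − Q) ≤ E^# W E for every projection E with kernel S, and every T ∈ L(H) satisfying T ≤ E^# W E for all such E satisfies T ≤ W(I − Q). -/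
open ContinuousLinearMap

/-- The Krein order: `S ≤ T` iff `J ∘ (T - S)` is a positive operator. -/
def kLE {H : Type*} [NormedAddCommGroup H] [InnerProductSpace ℂ H]
    [CompleteSpace H] (J S T : H →L[ℂ] H) : Prop := (J ∘L (T - S)).IsPositive

/-!
Put `P = J W` and `F = 1 - Q`. Then `P` is selfadjoint, `P F = F* P`, and `ker F = S`. For a
projection `E` with kernel `S` one has `E F = E` and `F E = F`, and these identities collapse
`E* P E - P F` to `(E - F)* P (E - F)`. Since `E - F` maps into `S`, on which `P` is
nonnegative, this is a positive operator, i.e. `W F ≤ E^# W E`. Conversely `F` itself is a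
projection with kernel `S`, and `F^# W F = W F`, so every lower bound of the family lies
below `W F`.
-/

section StarRing

variable {R : Type*} [Ring R] [StarRing R]

theorem star_mul_mul_eq_of_mul_eq_star_mul {F P : R} (hF : IsIdempotentElem F)
    (hPF : P * F = star F * P) : star F * P * F = P * F := by
  rw [mul_assoc, hPF, ← mul_assoc, ← star_mul, hF.eq]

theorem star_sub_mul_mul_sub_eq {E F P : R} (hEF : E * F = E) (hFE : F * E = F)
    (hPF : P * F = star F * P) :
    star (E - F) * P * (E - F) = star E * P * E - P * F := by
  have hF : IsIdempotentElem F := by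
    rw [IsIdempotentElem]
    nth_rewrite 1 [← hFE]
    rw [mul_assoc, hEF, hFE]
  have hEPF : star E * P * F = P * F := by
    rw [mul_assoc, hPF, ← mul_assoc, ← star_mul, hFE, ← hPF]
  have hFPE : star F * P * E = P * F := by rw [← hPF, mul_assoc, hFE]
  simp only [star_sub, sub_mul, mul_sub, hEPF, hFPE, star_mul_mul_eq_of_mul_eq_star_mul hF hPF]
  abel

end StarRing

namespace ContinuousLinearMap

variable {R M : Type*} [Ring R] [TopologicalSpace M] [AddCommGroup M] [IsTopologicalAddGroup M]
  [Module R M]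

theorem mul_one_sub_eq_self_of_ker_eq_range {E Q : M →L[R] M}
    (hker : LinearMap.ker (E : M →ₗ[R] M) = LinearMap.range (Q : M →ₗ[R] M)) :
    E * (1 - Q) = E := by
  have hEQ : E * Q = 0 := by
    apply coe_inj.mp
    exact LinearMap.range_le_ker_iff.mp hker.ge
  rw [mul_sub, mul_one, hEQ, sub_zero]

theorem one_sub_mul_eq_one_sub_of_ker_eq_range {E Q : M →L[R] M} (hE : IsIdempotentElem E)
    (hQ : IsIdempotentElem Q)
    (hker : LinearMap.ker (E : M →ₗ[R] M) = LinearMap.range (Q : M →ₗ[R] M)) :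
    (1 - Q) * E = 1 - Q := by
  have h : (1 - Q) * (1 - E) = 0 := by
    apply coe_inj.mp
    refine LinearMap.range_le_ker_iff.mp ?_
    rw [toLinearMap_sub, toLinearMap_sub, toLinearMap_one,
      ← LinearMap.IsIdempotentElem.ker_eq_range_one_sub hE.toLinearMap, hker,
      LinearMap.IsIdempotentElem.range_eq_ker_one_sub hQ.toLinearMap]
  rw [mul_sub, mul_one, sub_eq_zero] at h
  exact h.symm

end ContinuousLinearMap

theorem ContinuousLinearMap.isPositive_star_mul_mul {𝕜 E : Type*} [RCLike 𝕜]
    [NormedAddCommGroup E] [InnerProductSpace 𝕜 E] [CompleteSpace E] {T : E →L[𝕜] E}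
    (hT : IsSelfAdjoint T) (D : E →L[𝕜] E) (hD : ∀ x, 0 ≤ RCLike.re (inner 𝕜 (T (D x)) (D x))) :
    (star D * T * D).IsPositive := by
  refine isPositive_def'.mpr ⟨hT.conjugate' D, fun x => ?_⟩
  change 0 ≤ RCLike.re (inner 𝕜 (adjoint D (T (D x))) x)
  rw [adjoint_inner_left]
  exact hD x

section Krein

variable {H : Type*} [NormedAddCommGroup H] [InnerProductSpace ℂ H] [CompleteSpace H]

theorem kadj_eq_mul (J T : H →L[ℂ] H) : kadj J T = J * star T * J :=
  (mul_assoc _ _ _).symm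

theorem mul_kadj {J : H →L[ℂ] H} (hJ2 : J * J = 1) (T : H →L[ℂ] H) :
    J * kadj J T = star T * J := by
  rw [kadj_eq_mul, ← mul_assoc, ← mul_assoc, hJ2, one_mul]

theorem isSelfAdjoint_mul_of_kadj_eq_self {J W : H →L[ℂ] H} (hJ : IsSelfAdjoint J)
    (hJ2 : J * J = 1) (hW : kadj J W = W) : IsSelfAdjoint (J * W) := by
  rw [IsSelfAdjoint, star_mul, hJ.star_eq, ← mul_kadj hJ2, hW]

theorem kLE_comp_kadj_comp_comp {J W E F : H →L[ℂ] H} (hJ2 : J * J = 1)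
    (hP : IsSelfAdjoint (J * W)) (hPF : J * W * F = star F * (J * W)) (hEF : E * F = E)
    (hFE : F * E = F) (hD : ∀ x, 0 ≤ (inner ℂ ((J * W) ((E - F) x)) ((E - F) x)).re) :
    kLE J (W ∘L F) (kadj J E ∘L (W ∘L E)) := by
  have h : J ∘L (kadj J E ∘L (W ∘L E) - W ∘L F) = star (E - F) * (J * W) * (E - F) := by
    rw [star_sub_mul_mul_sub_eq hEF hFE hPF]
    simp only [← mul_def, mul_sub, ← mul_assoc, mul_kadj hJ2]
  rw [kLE, h]
  exact isPositive_star_mul_mul hP _ hD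

theorem kadj_comp_comp_self {J W F : H →L[ℂ] H} (hJ2 : J * J = 1) (hF : IsIdempotentElem F)
    (hPF : J * W * F = star F * (J * W)) : kadj J F ∘L (W ∘L F) = W ∘L F := by
  have h : J * (kadj J F * (W * F)) = J * (W * F) := by
    rw [← mul_assoc, mul_kadj hJ2, mul_assoc, ← mul_assoc J, ← mul_assoc,
      star_mul_mul_eq_of_mul_eq_star_mul hF hPF, mul_assoc]
  change kadj J F * (W * F) = W * F
  simpa only [← mul_assoc, hJ2, one_mul] using congrArg (J * ·) h

end Krein

theorem stmt3_general {H : Type*} [NormedAddCommGroup H] [InnerProductSpace ℂ H] [CompleteSpace H]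
    (J : H →L[ℂ] H) (hJ : IsSelfAdjoint J) (hJ2 : J ∘L J = 1)
    (W : H →L[ℂ] H) (hW : kadj J W = W)
    (S : Submodule ℂ H)
    (hSpos : ∀ s ∈ S, 0 ≤ (inner ℂ ((J ∘L W) s) s : ℂ).re)
    (Q : H →L[ℂ] H) (hQ : Q ∘L Q = Q) (hQran : LinearMap.range (Q : H →ₗ[ℂ] H) = S)
    (hWQ : W ∘L Q = kadj J Q ∘L W) :
    (∀ E : H →L[ℂ] H, E ∘L E = E → LinearMap.ker (E : H →ₗ[ℂ] H) = S →
        kLE J (W ∘L (1 - Q)) (kadj J E ∘L (W ∘L E))) ∧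
      (∀ T : H →L[ℂ] H,
        (∀ E : H →L[ℂ] H, E ∘L E = E → LinearMap.ker (E : H →ₗ[ℂ] H) = S →
          kLE J T (kadj J E ∘L (W ∘L E))) →
        kLE J T (W ∘L (1 - Q))) := by
  have hQ : IsIdempotentElem Q := hQ
  have hF : IsIdempotentElem (1 - Q) := hQ.one_sub
  have hP : IsSelfAdjoint (J * W) := isSelfAdjoint_mul_of_kadj_eq_self hJ hJ2 hW
  have hPQ : J * W * Q = star Q * (J * W) := by
    have hWQ : W * Q = kadj J Q * W := hWQ
    rw [mul_assoc, hWQ, ← mul_assoc, mul_kadj hJ2, mul_assoc]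
  have hPF : J * W * (1 - Q) = star (1 - Q) * (J * W) := by
    rw [mul_sub, mul_one, hPQ, star_sub, star_one, sub_mul, one_mul]
  have hkerF : LinearMap.ker ((1 - Q : H →L[ℂ] H) : H →ₗ[ℂ] H) = S := by
    rw [← hQran, LinearMap.IsIdempotentElem.range_eq_ker_one_sub hQ.toLinearMap]
    rfl
  refine ⟨fun E hE hkerE => ?_, fun T hT => ?_⟩
  · have hE : IsIdempotentElem E := hE
    have hker := hkerE.trans hQran.symm
    have hFE := one_sub_mul_eq_one_sub_of_ker_eq_range hE hQ hker
    refine kLE_comp_kadj_comp_comp hJ2 hP hPF (mul_one_sub_eq_self_of_ker_eq_range hker) hFE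
      fun x => hSpos _ ?_
    rw [← hkerF, LinearMap.mem_ker, coe_coe, ← mul_apply_eq_comp, mul_sub, hFE, hF.eq, sub_self,
      zero_apply]
  · simpa only [kadj_comp_comp_self hJ2 hF hPF] using hT (1 - Q) hF hkerF

/-- if `S` is `W`-nonnegative and `W` is `S`-complementable, witnessed by the
projection `Q`, then `W(I − Q)` is the greatest lower bound in the Krein order of the
family `{E^# W E : E² = E, ker E = S}`. -/
theorem stmt3 {H : Type*} [NormedAddCommGroup H] [InnerProductSpace ℂ H] [CompleteSpace H]
    (J : H →L[ℂ] H) (hJ : IsSelfAdjoint J) (hJ2 : J ∘L J = 1)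
    (W : H →L[ℂ] H) (hW : kadj J W = W)
    (S : Submodule ℂ H) (hS : IsClosed (S : Set H))
    (hSpos : ∀ s ∈ S, 0 ≤ (inner ℂ ((J ∘L W) s) s : ℂ).re)
    (Q : H →L[ℂ] H) (hQ : Q ∘L Q = Q) (hQran : LinearMap.range (Q : H →ₗ[ℂ] H) = S)
    (hWQ : W ∘L Q = kadj J Q ∘L W) :
    (∀ E : H →L[ℂ] H, E ∘L E = E → LinearMap.ker (E : H →ₗ[ℂ] H) = S →
        kLE J (W ∘L (1 - Q)) (kadj J E ∘L (W ∘L E))) ∧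
      (∀ T : H →L[ℂ] H,
        (∀ E : H →L[ℂ] H, E ∘L E = E → LinearMap.ker (E : H →ₗ[ℂ] H) = S →
          kLE J T (kadj J E ∘L (W ∘L E))) →
        kLE J T (W ∘L (1 - Q))) :=
  stmt3_general J hJ hJ2 W hW S hSpos Q hQ hQran hWQ
end

section
/- Let W be a Krein-selfadjoint operator on H and B ∈ L(H) with closed range. Then there exist B₊, B₋ ∈ L(H) such that B = B₊ + B₋, range(B₊) and range(B₋) are closed, range(B₊) is W-nonnegative, range(B₋) is W-nonpositive, ⟨u, v⟩ = 0 and ⟨(J∘W)u, v⟩ = 0 for all u ∈ range(B₊) and v ∈ range(B₋), and range(B) = range(B₊) + range(B₋). -/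
/-!
`A = J ∘ W` is selfadjoint, and so is its compression `T` to the closed subspace `M = range B`.
The positive and negative parts `T⁺, T⁻` of `T` are positive with `T⁺ T⁻ = 0`. Hence on
`N = ker T⁻` the form of `A` is that of `T⁺ ≥ 0`, while `T⁺` vanishes on `Nᗮ`, the closure of
the range of `T⁻`, where the form of `A` is that of `-T⁻ ≤ 0`; the cross terms `⟪T⁺ n, v⟫`
vanish for the same reason. Then `B₊ = P_N B` and `B₋ = B - B₊`, with ranges `N` and
`Nᗮ ⊓ M`.
-/

open ContinuousLinearMap

open RCLike

section Projection

variable {𝕜 E F : Type*} [RCLike 𝕜] [NormedAddCommGroup E] [InnerProductSpace 𝕜 E]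
  [NormedAddCommGroup F] [NormedSpace 𝕜 F]
  (B : F →L[𝕜] E) (N : Submodule 𝕜 E) [N.HasOrthogonalProjection]

theorem range_starProjection_comp_of_le (hN : N ≤ B.range) :
    (N.starProjection ∘L B).range = N := by
  refine le_antisymm ?_ fun v hv => ?_
  · rintro _ ⟨x, rfl⟩
    exact N.starProjection_apply_mem (B x)
  · obtain ⟨x, rfl⟩ := hN hv
    exact ⟨x, Submodule.starProjection_eq_self_iff.mpr hv⟩

theorem range_sub_starProjection_comp_of_le (hN : N ≤ B.range) :
    (B - N.starProjection ∘L B).range = Nᗮ ⊓ B.range := by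
  refine le_antisymm ?_ fun v ⟨hv, x, hx⟩ => ⟨x, ?_⟩
  · rintro _ ⟨x, rfl⟩
    exact ⟨N.sub_starProjection_mem_orthogonal (B x),
      B.range.sub_mem ⟨x, rfl⟩ (hN (N.starProjection_apply_mem (B x)))⟩
  · have hx : B x = v := hx
    simp [hx, (N.starProjection_apply_eq_zero_iff).mpr hv]

end Projection

section PosNegSplit

variable {E : Type*} [NormedAddCommGroup E] [InnerProductSpace ℂ E] [CompleteSpace E]

theorem IsSelfAdjoint.orthogonal_ker_le_ker_of_mul_eq_zero {R S : E →L[ℂ] E}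
    (hS : IsSelfAdjoint S) (h : R * S = 0) : S.kerᗮ ≤ R.ker := by
  rw [S.orthogonal_ker, hS.adjoint_eq]
  refine Submodule.topologicalClosure_minimal _ ?_ R.isClosed_ker
  rintro _ ⟨x, rfl⟩
  exact congr($h x)

theorem IsSelfAdjoint.exists_isClosed_nonneg_nonpos_orthogonal {T : E →L[ℂ] E}
    (hT : IsSelfAdjoint T) :
    ∃ N : Submodule ℂ E, IsClosed (N : Set E) ∧
      (∀ n ∈ N, 0 ≤ re (inner ℂ (T n) n)) ∧ (∀ v ∈ Nᗮ, re (inner ℂ (T v) v) ≤ 0) ∧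
      ∀ n ∈ N, ∀ v ∈ Nᗮ, inner ℂ (T n) v = 0 := by
  have hpos : (T⁺).IsPositive := (nonneg_iff_isPositive _).mp (CFC.posPart_nonneg T)
  have hneg : (T⁻).IsPositive := (nonneg_iff_isPositive _).mp (CFC.negPart_nonneg T)
  have hT_ker {n : E} (hn : n ∈ (T⁻).ker) : T n = T⁺ n := by
    conv_lhs => rw [← CFC.posPart_sub_negPart T]
    simp [show T⁻ n = 0 from hn]
  have hpos_perp {v : E} (hv : v ∈ (T⁻).kerᗮ) : T⁺ v = 0 :=
    hneg.isSelfAdjoint.orthogonal_ker_le_ker_of_mul_eq_zero (CFC.posPart_mul_negPart T) hv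
  have hT_perp {v : E} (hv : v ∈ (T⁻).kerᗮ) : T v = -T⁻ v := by
    conv_lhs => rw [← CFC.posPart_sub_negPart T]
    simp [hpos_perp hv]
  refine ⟨(T⁻).ker, (T⁻).isClosed_ker, fun n hn => ?_, fun v hv => ?_, fun n hn v hv => ?_⟩
  · rw [hT_ker hn]
    exact hpos.re_inner_nonneg_left n
  · rw [hT_perp hv, inner_neg_left, map_neg, neg_nonpos]
    exact hneg.re_inner_nonneg_left v
  · rw [hT_ker hn, ← adjoint_inner_right, hpos.isSelfAdjoint.adjoint_eq, hpos_perp hv,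
      inner_zero_right]

theorem IsSelfAdjoint.exists_le_isClosed_nonneg_nonpos_orthogonal {A : E →L[ℂ] E}
    (hA : IsSelfAdjoint A) {M : Submodule ℂ E} (hM : IsClosed (M : Set E)) :
    ∃ N ≤ M, IsClosed (N : Set E) ∧
      (∀ n ∈ N, 0 ≤ re (inner ℂ (A n) n)) ∧ (∀ v ∈ Nᗮ ⊓ M, re (inner ℂ (A v) v) ≤ 0) ∧
      ∀ n ∈ N, ∀ v ∈ Nᗮ ⊓ M, inner ℂ (A n) v = 0 := by
  have : CompleteSpace M := hM.completeSpace_coe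
  have hcomp (u w : M) :
      inner ℂ ((adjoint M.subtypeL ∘L A ∘L M.subtypeL) u) w = inner ℂ (A u) (w : E) :=
    adjoint_inner_left M.subtypeL w (A u)
  obtain ⟨N, hNc, hpos, hneg, hcross⟩ :=
    (hA.adjoint_conj M.subtypeL).exists_isClosed_nonneg_nonpos_orthogonal
  have hperp {v : E} (hv : v ∈ (N.map M.subtype)ᗮ ⊓ M) : (⟨v, hv.2⟩ : M) ∈ Nᗮ :=
    fun n hn => hv.1 n ⟨n, hn, rfl⟩
  refine ⟨N.map M.subtype, M.map_subtype_le N, ?_, ?_, fun v hv => ?_, ?_⟩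
  · rw [Submodule.map_coe]
    exact hM.isClosedMap_subtype_val _ hNc
  · rintro _ ⟨n, hn, rfl⟩
    simpa only [hcomp, Submodule.subtype_apply] using hpos n hn
  · simpa only [hcomp, Submodule.subtype_apply] using hneg _ (hperp hv)
  · rintro _ ⟨n, hn, rfl⟩ v hv
    simpa only [hcomp, Submodule.subtype_apply] using hcross n hn _ (hperp hv)

end PosNegSplit

theorem isSelfAdjoint_comp_of_kadj_eq {H : Type*} [NormedAddCommGroup H] [InnerProductSpace ℂ H]
    [CompleteSpace H] {J W : H →L[ℂ] H} (hJ : IsSelfAdjoint J) (hJ2 : J ∘L J = 1)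
    (hW : kadj J W = W) : IsSelfAdjoint (J ∘L W) := by
  rw [isSelfAdjoint_iff', adjoint_comp, hJ.adjoint_eq]
  conv_rhs => rw [← hW]
  rw [kadj, ← comp_assoc, ← comp_assoc, hJ2]
  rfl

/-- any closed-range `B` decomposes as `B = B₊ + B₋` with `range B₊` closed
and `W`-nonnegative, `range B₋` closed and `W`-nonpositive, the two ranges orthogonal both
in the Hilbert and in the `W`-indefinite inner products, and
`range B = range B₊ + range B₋`. -/
theorem stmt9 {H : Type*} [NormedAddCommGroup H] [InnerProductSpace ℂ H] [CompleteSpace H]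
    (J : H →L[ℂ] H) (hJ : IsSelfAdjoint J) (hJ2 : J ∘L J = 1)
    (W : H →L[ℂ] H) (hW : kadj J W = W)
    (B : H →L[ℂ] H) (hB : IsClosed (Set.range ⇑B)) :
    ∃ Bp Bm : H →L[ℂ] H,
      B = Bp + Bm ∧
      IsClosed (Set.range ⇑Bp) ∧ IsClosed (Set.range ⇑Bm) ∧
      (∀ x : H, 0 ≤ (inner ℂ ((J ∘L W) (Bp x)) (Bp x) : ℂ).re) ∧
      (∀ x : H, (inner ℂ ((J ∘L W) (Bm x)) (Bm x) : ℂ).re ≤ 0) ∧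
      (∀ x y : H, (inner ℂ (Bp x) (Bm y) : ℂ) = 0) ∧
      (∀ x y : H, (inner ℂ ((J ∘L W) (Bp x)) (Bm y) : ℂ) = 0) ∧
      LinearMap.range (B : H →ₗ[ℂ] H) = LinearMap.range (Bp : H →ₗ[ℂ] H) ⊔ LinearMap.range (Bm : H →ₗ[ℂ] H) := by
  obtain ⟨N, hNB, hNc, hpos, hneg, hcross⟩ :=
    (isSelfAdjoint_comp_of_kadj_eq hJ hJ2 hW).exists_le_isClosed_nonneg_nonpos_orthogonal
      (M := LinearMap.range (B : H →ₗ[ℂ] H)) hB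
  have : CompleteSpace N := hNc.completeSpace_coe
  have hp := range_starProjection_comp_of_le B N hNB
  have hm := range_sub_starProjection_comp_of_le B N hNB
  have hp_mem (x : H) : (N.starProjection ∘L B) x ∈ N := hp.le (LinearMap.mem_range_self _ x)
  have hm_mem (x : H) : (B - N.starProjection ∘L B) x ∈ Nᗮ ⊓ B.range :=
    hm.le (LinearMap.mem_range_self _ x)
  refine ⟨N.starProjection ∘L B, B - N.starProjection ∘L B, by abel, ?_, ?_,
    fun x => hpos _ (hp_mem x), fun x => hneg _ (hm_mem x),
    fun x y => Submodule.inner_right_of_mem_orthogonal (hp_mem x) (hm_mem y).1,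
    fun x y => hcross _ (hp_mem x) _ (hm_mem y), ?_⟩
  · rw [← coe_coe, ← LinearMap.coe_range, hp]
    exact hNc
  · rw [← coe_coe, ← LinearMap.coe_range, hm]
    exact (Submodule.isClosed_orthogonal N).inter hB
  · rw [hp, hm, Submodule.sup_orthogonal_inf_of_hasOrthogonalProjection hNB]
end

section
/- Let W be a Krein-selfadjoint operator on H, B ∈ L(H) with closed range and C ∈ L(H). Then there exist Z₁, Z₂ ∈ L(H) with B^# W (BZ₁ − C) = 0 and (BZ₂)^# W (BZ₂) = 0 (equivalently, there exists an indefinite min-max solution of BX − C = 0 with weight W) if and only if range(C) ⊆ range(B) + W⁻¹(range(B)^[⊥]). -/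
/-!
Put `T = B* J W`. Since `J` is invertible, `B^# W (B Z₁ - C) = 0` says `T B Z₁ = T C`, and by
Douglas' lemma a bounded solution `Z₁` exists iff `range (T C) ⊆ range (T B)`, i.e. iff every
`C x` lies in `range B + ker T`; and `ker T = W⁻¹(J (range B)ᗮ) = W⁻¹(range B^[⊥])`.
The second equation is solved by `Z₂ = 0`.
-/

open ContinuousLinearMap

open Filter

theorem LinearMap.continuous_of_mapsTo_of_injOn_of_continuous_comp
    {𝕜 E F G : Type*} [NontriviallyNormedField 𝕜]
    [NormedAddCommGroup E] [NormedSpace 𝕜 E] [CompleteSpace E] [TopologicalSpace F] [T2Space F]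
    [NormedAddCommGroup G] [NormedSpace 𝕜 G] [CompleteSpace G]
    {N : Set E} (hN : IsClosed N) (Z : G →ₗ[𝕜] E) (hZN : ∀ x, Z x ∈ N)
    {A : E → F} (hA : Continuous A) (hinj : N.InjOn A) (hAZ : Continuous (A ∘ Z)) :
    Continuous Z := by
  refine Z.continuous_of_seq_closed_graph fun u x y hux hZy => ?_
  have hyN : y ∈ N := hN.mem_of_tendsto hZy (Eventually.of_forall fun n => hZN (u n))
  have hAy : A y = A (Z x) :=
    tendsto_nhds_unique ((hA.tendsto y).comp hZy) ((hAZ.tendsto x).comp hux)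
  exact hinj hyN (hZN x) hAy

section Factorization

variable {𝕜 E F G : Type*} [RCLike 𝕜]
  [NormedAddCommGroup E] [InnerProductSpace 𝕜 E] [CompleteSpace E]
  [NormedAddCommGroup F] [NormedSpace 𝕜 F]
  [NormedAddCommGroup G] [NormedSpace 𝕜 G] [CompleteSpace G]

omit [CompleteSpace E] in
theorem ContinuousLinearMap.injOn_orthogonal_ker (A : E →L[𝕜] F) :
    Set.InjOn A (A.kerᗮ : Submodule 𝕜 E) := by
  intro n hn m hm hnm
  have hmem : n - m ∈ A.ker ⊓ A.kerᗮ :=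
    ⟨by simp [hnm], Submodule.sub_mem _ hn hm⟩
  rw [A.ker.inf_orthogonal_eq_bot, Submodule.mem_bot, sub_eq_zero] at hmem
  exact hmem

/-- Douglas' factorization lemma. -/
theorem ContinuousLinearMap.exists_comp_eq_of_range_le (A : E →L[𝕜] F) (D : G →L[𝕜] F)
    (h : D.range ≤ A.range) : ∃ Z : G →L[𝕜] E, A ∘L Z = D := by
  obtain ⟨g, hg⟩ := (A : E →ₗ[𝕜] F).rangeRestrict.exists_rightInverse_of_surjective
    (LinearMap.range_rangeRestrict _)
  have : CompleteSpace A.ker := A.isClosed_ker.completeSpace_coe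
  -- Project an arbitrary linear solution onto `(ker A)ᗮ`, where `A` is injective; the closed
  -- graph theorem then makes it bounded.
  let Z : G →ₗ[𝕜] E := A.kerᗮ.starProjection.toLinearMap ∘ₗ g ∘ₗ
    (D : G →ₗ[𝕜] F).codRestrict A.range fun x => h ⟨x, rfl⟩
  have hAZ : ∀ x, A (Z x) = D x := by
    intro x
    set y : A.range := ⟨D x, h ⟨x, rfl⟩⟩
    have hAg : A (g y) = D x := congrArg Subtype.val (LinearMap.congr_fun hg y)
    have hproj : A (A.ker.starProjection (g y)) = 0 := A.ker.starProjection_apply_mem _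
    change A (A.kerᗮ.starProjection (g y)) = D x
    rw [Submodule.starProjection_orthogonal_val, map_sub, hproj, hAg, sub_zero]
  have hZN : ∀ x, Z x ∈ A.kerᗮ := fun x => A.kerᗮ.starProjection_apply_mem _
  have hZ : Continuous Z := Z.continuous_of_mapsTo_of_injOn_of_continuous_comp
    A.ker.isClosed_orthogonal hZN
    A.continuous A.injOn_orthogonal_ker (by simpa [Function.comp_def, hAZ] using D.continuous)
  exact ⟨⟨Z, hZ⟩, ext hAZ⟩

theorem ContinuousLinearMap.exists_comp_eq_iff_range_le (A : E →L[𝕜] F) (D : G →L[𝕜] F) :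
    (∃ Z : G →L[𝕜] E, A ∘L Z = D) ↔ D.range ≤ A.range := by
  refine ⟨?_, A.exists_comp_eq_of_range_le D⟩
  rintro ⟨Z, rfl⟩
  exact LinearMap.range_comp_le_range _ _

end Factorization

theorem LinearMap.range_comp_le_range_comp_iff {R M N P : Type*} [Ring R]
    [AddCommGroup M] [Module R M] [AddCommGroup N] [Module R N] [AddCommGroup P] [Module R P]
    (T : N →ₗ[R] P) (B C : M →ₗ[R] N) :
    (T ∘ₗ C).range ≤ (T ∘ₗ B).range ↔ ∀ x, ∃ u v, C x = B u + v ∧ T v = 0 := by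
  refine ⟨fun h x => ?_, fun h => ?_⟩
  · obtain ⟨u, hu⟩ := h ⟨x, rfl⟩
    exact ⟨u, C x - B u, (add_sub_cancel _ _).symm, by simp_all⟩
  · rintro _ ⟨x, rfl⟩
    obtain ⟨u, v, hx, hv⟩ := h x
    exact ⟨u, by simp [hx, hv]⟩

theorem ContinuousLinearMap.forall_inner_apply_eq_zero_iff {𝕜 E F : Type*} [RCLike 𝕜]
    [NormedAddCommGroup E] [InnerProductSpace 𝕜 E] [CompleteSpace E]
    [NormedAddCommGroup F] [InnerProductSpace 𝕜 F] [CompleteSpace F]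
    (B : E →L[𝕜] F) (z : F) : (∀ y, inner 𝕜 z (B y) = 0) ↔ adjoint B z = 0 := by
  have hker : adjoint B z = 0 ↔ z ∈ B.rangeᗮ := by rw [orthogonal_range]; rfl
  rw [hker, Submodule.mem_orthogonal']
  exact ⟨fun h _ ⟨y, hy⟩ => hy ▸ h y, fun h y => h _ ⟨y, rfl⟩⟩

theorem kadj_comp_eq_zero_iff {H : Type*} [NormedAddCommGroup H] [InnerProductSpace ℂ H]
    [CompleteSpace H] {J : H →L[ℂ] H} (hJ2 : J ∘L J = 1) (T X : H →L[ℂ] H) :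
    kadj J T ∘L X = 0 ↔ adjoint T ∘L J ∘L X = 0 := by
  have hJinj : ∀ Y : H →L[ℂ] H, J ∘L Y = 0 → Y = 0 := fun Y hY => by
    rw [← id_comp Y, ← one_def, ← hJ2, comp_assoc, hY, comp_zero]
  exact ⟨fun h => hJinj _ (by simpa only [kadj, comp_assoc] using h),
    fun h => by simp only [kadj, comp_assoc, h, comp_zero]⟩

theorem stmt11_general {H : Type*} [NormedAddCommGroup H] [InnerProductSpace ℂ H] [CompleteSpace H]
    (J : H →L[ℂ] H) (hJ2 : J ∘L J = 1)
    (W : H →L[ℂ] H)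
    (B : H →L[ℂ] H) (C : H →L[ℂ] H) :
    (∃ Z₁ Z₂ : H →L[ℂ] H,
      kadj J B ∘L (W ∘L (B ∘L Z₁ - C)) = 0 ∧
      kadj J (B ∘L Z₂) ∘L (W ∘L (B ∘L Z₂)) = 0) ↔
    (∀ x : H, ∃ u v : H, C x = B u + v ∧
      ∀ y : H, (inner ℂ (J (W v)) (B y) : ℂ) = 0) := by
  set T : H →L[ℂ] H := adjoint B ∘L J ∘L W
  have hnormal :
      ∀ Z, kadj J B ∘L (W ∘L (B ∘L Z - C)) = 0 ↔ (T ∘L B) ∘L Z = T ∘L C := fun Z => by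
    rw [kadj_comp_eq_zero_iff hJ2]
    simp only [T, comp_assoc, comp_sub, sub_eq_zero]
  calc _ ↔ ∃ Z, (T ∘L B) ∘L Z = T ∘L C :=
        ⟨fun ⟨Z, _, h, _⟩ => ⟨Z, (hnormal Z).1 h⟩, fun ⟨Z, h⟩ => ⟨Z, 0, (hnormal Z).2 h, by simp⟩⟩
    _ ↔ (T ∘L C).range ≤ (T ∘L B).range := exists_comp_eq_iff_range_le _ _
    _ ↔ ∀ x, ∃ u v, C x = B u + v ∧ T v = 0 := LinearMap.range_comp_le_range_comp_iff _ _ _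
    _ ↔ _ := by simp only [forall_inner_apply_eq_zero_iff]; rfl

/-- there exist `Z₁, Z₂` with `B^# W (BZ₁ − C) = 0` and
`(BZ₂)^# W (BZ₂) = 0` iff `range C ⊆ range B + W⁻¹(range B^[⊥])`. -/
theorem stmt11 {H : Type*} [NormedAddCommGroup H] [InnerProductSpace ℂ H] [CompleteSpace H]
    (J : H →L[ℂ] H) (hJ : IsSelfAdjoint J) (hJ2 : J ∘L J = 1)
    (W : H →L[ℂ] H) (hW : kadj J W = W)
    (B : H →L[ℂ] H) (hB : IsClosed (Set.range ⇑B)) (C : H →L[ℂ] H) :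
    (∃ Z₁ Z₂ : H →L[ℂ] H,
      kadj J B ∘L (W ∘L (B ∘L Z₁ - C)) = 0 ∧
      kadj J (B ∘L Z₂) ∘L (W ∘L (B ∘L Z₂)) = 0) ↔
    (∀ x : H, ∃ u v : H, C x = B u + v ∧
      ∀ y : H, (inner ℂ (J (W v)) (B y) : ℂ) = 0) :=
  stmt11_general J hJ2 W B C
end

section
/- Let H be a finite-dimensional complex inner product space, J ∈ L(H) a signature operator, W ∈ L(H) Krein-selfadjoint, and B, C ∈ L(H) such that range(B) is W-nonnegative. Define f : L(H) → ℝ by f(X) = re(tr((BX − C)* ∘ (J∘W) ∘ (BX − C))). Then X₀ ∈ L(H) is a global minimizer of f (i.e. f(X₀) ≤ f(X) for all X ∈ L(H)) if and only if B^# W (BX₀ − C) = 0, equivalently B* ∘ (J∘W) ∘ (B∘X₀ − C) = 0. -/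
/-!
Put `M = J ∘ W`, selfadjoint because `W` is Krein-selfadjoint, `D = B X₀ - C` and
`A = B* M D`. Expanding the quadratic objective along a line gives
`f (X₀ + t Y) = f X₀ + 2 t re tr (Y* A) + t² re tr ((B Y)* M (B Y))`,
and the last trace is nonnegative because `range B` is `M`-nonnegative. So `A = 0` makes `X₀` a
global minimizer; conversely, minimality along `Y = A` makes the quadratic
`t ↦ 2 t re tr (A* A) + t² (…)` nonnegative, so by its discriminant
`re tr (A* A) = ∑ ‖A bᵢ‖² = 0` and `A = 0`. Finally `B^# W D = J A` and `J` is invertible.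
-/

open ContinuousLinearMap

theorem eq_zero_of_forall_quadratic_nonneg {a b : ℝ} (h : ∀ t : ℝ, 0 ≤ a * t ^ 2 + 2 * b * t) :
    b = 0 := by
  have := discrim_le_zero (K := ℝ) (c := 0) fun t => by simpa [sq, mul_comm] using h t
  rw [discrim] at this
  nlinarith

namespace ContinuousLinearMap

section Krein

variable {𝕜 E : Type*} [RCLike 𝕜] [NormedAddCommGroup E] [InnerProductSpace 𝕜 E]

theorem comp_eq_zero_iff_of_comp_self_eq_one {J : E →L[𝕜] E} (hJ2 : J ∘L J = 1)
    (T : E →L[𝕜] E) : J ∘L T = 0 ↔ T = 0 := by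
  refine ⟨fun h => ?_, fun h => by rw [h, comp_zero]⟩
  rw [← id_comp T, ← one_def, ← hJ2, comp_assoc, h, comp_zero]

variable [CompleteSpace E]

theorem isSelfAdjoint_comp_of_comp_adjoint_comp_eq {J W : E →L[𝕜] E} (hJ : IsSelfAdjoint J)
    (hJ2 : J ∘L J = 1) (hW : J ∘L adjoint W ∘L J = W) : IsSelfAdjoint (J ∘L W) := by
  rw [isSelfAdjoint_iff', adjoint_comp, hJ.adjoint_eq]
  calc adjoint W ∘L J = (J ∘L J) ∘L (adjoint W ∘L J) := by rw [hJ2, one_def, id_comp]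
    _ = J ∘L W := by rw [comp_assoc, hW]

end Krein

section Trace

variable {𝕜 E ι : Type*} [RCLike 𝕜] [NormedAddCommGroup E] [InnerProductSpace 𝕜 E]
  [CompleteSpace E]

local notation "tr" => LinearMap.trace 𝕜 E

open scoped InnerProductSpace

theorem trace_adjoint_comp_eq_sum_inner [Fintype ι] (b : OrthonormalBasis ι 𝕜 E)
    (S T : E →L[𝕜] E) :
    tr (adjoint S ∘L T) = ∑ i, ⟪S (b i), T (b i)⟫_𝕜 := by
  simp [LinearMap.trace_eq_sum_inner _ b, adjoint_inner_right]

theorem trace_adjoint_smul_comp (c : 𝕜) (S T : E →L[𝕜] E) :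
    tr (adjoint (c • S) ∘L T) = starRingEnd 𝕜 c * tr (adjoint S ∘L T) := by
  rw [map_smulₛₗ, smul_comp, toLinearMap_smul, map_smul, smul_eq_mul]

theorem trace_adjoint_comp_smul (c : 𝕜) (S T : E →L[𝕜] E) :
    tr (adjoint S ∘L (c • T)) = c * tr (adjoint S ∘L T) := by
  rw [comp_smul, toLinearMap_smul, map_smul, smul_eq_mul]

variable [FiniteDimensional 𝕜 E]

theorem conj_trace_adjoint_comp_comp {M : E →L[𝕜] E} (hM : IsSelfAdjoint M) (S T : E →L[𝕜] E) :
    starRingEnd 𝕜 (tr (adjoint S ∘L (M ∘L T))) = tr (adjoint T ∘L (M ∘L S)) := by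
  simp only [trace_adjoint_comp_eq_sum_inner (stdOrthonormalBasis 𝕜 E), map_sum, comp_apply]
  refine Finset.sum_congr rfl fun i _ => ?_
  rw [inner_conj_symm]
  exact hM.isSymmetric _ _

theorem re_trace_adjoint_comp_comp_add {M : E →L[𝕜] E} (hM : IsSelfAdjoint M)
    (D F : E →L[𝕜] E) :
    RCLike.re (tr (adjoint (D + F) ∘L (M ∘L (D + F)))) =
      RCLike.re (tr (adjoint D ∘L (M ∘L D))) + 2 * RCLike.re (tr (adjoint F ∘L (M ∘L D))) +
        RCLike.re (tr (adjoint F ∘L (M ∘L F))) := by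
  have hconj := congrArg RCLike.re (conj_trace_adjoint_comp_comp hM F D)
  rw [RCLike.conj_re] at hconj
  simp only [map_add, comp_add, add_comp, toLinearMap_add, map_add]
  linarith

theorem re_trace_adjoint_comp_comp_nonneg {M T : E →L[𝕜] E}
    (h : ∀ x, 0 ≤ RCLike.re ⟪M (T x), T x⟫_𝕜) : 0 ≤ RCLike.re (tr (adjoint T ∘L (M ∘L T))) := by
  rw [trace_adjoint_comp_eq_sum_inner (stdOrthonormalBasis 𝕜 E), map_sum]
  refine Finset.sum_nonneg fun i _ => ?_
  rw [comp_apply, ← inner_conj_symm, RCLike.conj_re]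
  exact h _

theorem eq_zero_of_re_trace_adjoint_comp_self_eq_zero {A : E →L[𝕜] E}
    (h : RCLike.re (tr (adjoint A ∘L A)) = 0) : A = 0 := by
  set b := stdOrthonormalBasis 𝕜 E
  simp only [trace_adjoint_comp_eq_sum_inner b, map_sum, inner_self_eq_norm_sq] at h
  have hAb : ∀ i, A (b i) = 0 := fun i => by
    simpa using (Finset.sum_eq_zero_iff_of_nonneg fun j _ => sq_nonneg ‖A (b j)‖).mp h i
      (Finset.mem_univ i)
  exact coe_injective (b.toBasis.ext fun i => by simpa using hAb i)

theorem re_trace_residual_add_smul {M : E →L[𝕜] E} (hM : IsSelfAdjoint M)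
    (B C X Y : E →L[𝕜] E) (t : ℝ) :
    RCLike.re (tr (adjoint (B ∘L (X + (t : 𝕜) • Y) - C) ∘L
        (M ∘L (B ∘L (X + (t : 𝕜) • Y) - C)))) =
      RCLike.re (tr (adjoint (B ∘L X - C) ∘L (M ∘L (B ∘L X - C)))) +
        2 * t * RCLike.re (tr (adjoint Y ∘L (adjoint B ∘L (M ∘L (B ∘L X - C))))) +
        t ^ 2 * RCLike.re (tr (adjoint (B ∘L Y) ∘L (M ∘L (B ∘L Y)))) := by
  have hsplit : B ∘L (X + (t : 𝕜) • Y) - C = (B ∘L X - C) + (t : 𝕜) • (B ∘L Y) := by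
    rw [comp_add, comp_smul]; abel
  rw [hsplit, re_trace_adjoint_comp_comp_add hM, trace_adjoint_smul_comp, comp_smul,
    trace_adjoint_smul_comp, trace_adjoint_comp_smul, adjoint_comp, comp_assoc]
  simp only [RCLike.conj_ofReal, ← mul_assoc, RCLike.re_ofReal_mul, ← RCLike.ofReal_mul]
  ring

end Trace

end ContinuousLinearMap

/-- in finite dimensions, if `range B` is `W`-nonnegative, then `X₀` is a
global minimizer of `f(X) = re tr((BX−C)* (J W) (BX−C))` iff `B^# W (BX₀ − C) = 0`,
equivalently `B* (J W) (BX₀ − C) = 0`. -/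
theorem stmt15 {H : Type*} [NormedAddCommGroup H] [InnerProductSpace ℂ H]
    [FiniteDimensional ℂ H]
    (J : H →L[ℂ] H) (hJ : IsSelfAdjoint J) (hJ2 : J ∘L J = 1)
    (W : H →L[ℂ] H) (hW : J ∘L adjoint W ∘L J = W)
    (B C : H →L[ℂ] H)
    (hBpos : ∀ x : H, 0 ≤ (inner ℂ ((J ∘L W) (B x)) (B x) : ℂ).re)
    (X₀ : H →L[ℂ] H) :
    ((∀ X : H →L[ℂ] H,
        (LinearMap.trace ℂ H
          ((adjoint (B ∘L X₀ - C) ∘L ((J ∘L W) ∘L (B ∘L X₀ - C)) : H →L[ℂ] H) :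
            H →ₗ[ℂ] H)).re ≤
        (LinearMap.trace ℂ H
          ((adjoint (B ∘L X - C) ∘L ((J ∘L W) ∘L (B ∘L X - C)) : H →L[ℂ] H) :
            H →ₗ[ℂ] H)).re) ↔
      (J ∘L adjoint B ∘L J) ∘L (W ∘L (B ∘L X₀ - C)) = 0) ∧
    ((J ∘L adjoint B ∘L J) ∘L (W ∘L (B ∘L X₀ - C)) = 0 ↔
      adjoint B ∘L ((J ∘L W) ∘L (B ∘L X₀ - C)) = 0) := by
  have hM := isSelfAdjoint_comp_of_comp_adjoint_comp_eq hJ hJ2 hW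
  set M := J ∘L W
  have hexpand := re_trace_residual_add_smul hM B C X₀
  set A := adjoint B ∘L (M ∘L (B ∘L X₀ - C))
  have hA : (J ∘L adjoint B ∘L J) ∘L (W ∘L (B ∘L X₀ - C)) = J ∘L A := by
    ext x; simp [A, M]
  simp only [RCLike.re_to_complex] at hexpand
  rw [hA, comp_eq_zero_iff_of_comp_self_eq_one hJ2, and_iff_left Iff.rfl]
  constructor
  · intro hmin
    refine eq_zero_of_re_trace_adjoint_comp_self_eq_zero
      (eq_zero_of_forall_quadratic_nonneg (a := RCLike.re (LinearMap.trace ℂ H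
        (adjoint (B ∘L A) ∘L (M ∘L (B ∘L A))))) fun t => ?_)
    simp only [RCLike.re_to_complex]
    have hline := hexpand A t ▸ hmin (X₀ + (t : ℂ) • A)
    linarith
  · intro hA0 X
    have hq : 0 ≤ (LinearMap.trace ℂ H
        (adjoint (B ∘L (X - X₀)) ∘L (M ∘L (B ∘L (X - X₀))) : H →L[ℂ] H)).re :=
      re_trace_adjoint_comp_comp_nonneg (𝕜 := ℂ) (M := M) fun x => hBpos ((X - X₀) x)
    have hline := hexpand (X - X₀) 1
    simp only [map_one, one_smul, add_sub_cancel, hA0, comp_zero, toLinearMap_zero, map_zero,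
      Complex.zero_re, mul_zero, add_zero, one_pow, one_mul] at hline
    linarith
end
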